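/- With q ≥ m and the orthonormal family B^k_q|x⟩ as defined, the tensor power state satisfies |φ_q⟩^{⊗(k+1)} = Σ_{x ∈ {0,1}^m, |x| ≤ k} α^{m−|x|} β^{|x|} B^k_q|x⟩ + μ|ν'⟩, where |ν'⟩ = (1/μ) Σ_{s_1+⋯+s_{k+1}+k+1 ≤ m} α^{s_1+⋯+s_{k+1}} β^{k+1} |s_1,…,s_{k+1}⟩ is a unit vector orthogonal to every B^k_q|x⟩ with |x| ≤ k, and μ ≥ 0 is the corresponding normalization. -/

import Mathlib

open Finset

/-- Hamming weight of a bit string. -/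
def hamWt {m : ℕ} (x : Fin m → Bool) : ℕ :=
  (Finset.univ.filter fun i => x i = true).card

/-- The (sorted) list of positions of the ones of `x`. -/
def onesList {m : ℕ} (x : Fin m → Bool) : List ℕ :=
  ((List.finRange m).filter fun i => x i).map Fin.val

/-- `sRun x i` is the length `s_{i+1}` of the run of zeros preceding the
`(i+1)`-st one of `x` (writing `x = 0^{s_1}1 0^{s_2}1 ⋯ 0^{s_h}1 0^t`). -/
def sRun {m : ℕ} (x : Fin m → Bool) (i : ℕ) : ℕ :=
  (onesList x).getD i 0 - (if i = 0 then 0 else (onesList x).getD (i - 1) 0 + 1)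

/-- The trailing run of zeros, `t = m - s_1 - ⋯ - s_h - h`. -/
def tTrail {m : ℕ} (x : Fin m → Bool) : ℕ :=
  m - ((List.range (hamWt x)).map (sRun x)).sum - hamWt x

/-- Amplitudes of `|φ_q⟩ := Σ_{s=0}^{q-1} β α^s |s⟩ + α^q |q⟩ ∈ ℂ^{q+1}`. -/
noncomputable def phiVec (q : ℕ) (α β : ℝ) : Fin (q + 1) → ℝ :=
  fun s => if (s : ℕ) < q then β * α ^ (s : ℕ) else α ^ q

/-- Amplitudes of the middle register state
`Σ_{j=0}^{q-t-1} α^j β |j+t⟩ + α^{q-t}|q⟩ ∈ ℂ^{q+1}`. -/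
noncomputable def midVec (q t : ℕ) (α β : ℝ) : Fin (q + 1) → ℝ :=
  fun s =>
    if t ≤ (s : ℕ) ∧ (s : ℕ) < q then β * α ^ ((s : ℕ) - t)
    else if (s : ℕ) = q then α ^ (q - t) else 0

/-- The encoded vector
`B^k_q|x⟩ = |s_1,…,s_h⟩ ⊗ (Σ_{j=0}^{q-t-1} α^j β |j+t⟩ + α^{q-t}|q⟩) ⊗ |φ_q⟩^{⊗(k−h)}`
in `(ℂ^{q+1})^{⊗(k+1)}`, where `h = hamWt x`. -/
noncomputable def Bvec (q m k : ℕ) (α β : ℝ) (x : Fin m → Bool) :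
    EuclideanSpace ℝ (Fin (k + 1) → Fin (q + 1)) :=
  WithLp.toLp 2 fun s' => ∏ i : Fin (k + 1),
    (if (i : ℕ) < hamWt x then (if ((s' i : ℕ)) = sRun x (i : ℕ) then 1 else 0)
     else if (i : ℕ) = hamWt x then midVec q (tTrail x) α β (s' i)
     else phiVec q α β (s' i))


/-- The tensor power `|φ_q⟩^{⊗(k+1)}`. -/
noncomputable def phiPow (q k : ℕ) (α β : ℝ) :
    EuclideanSpace ℝ (Fin (k + 1) → Fin (q + 1)) :=
  WithLp.toLp 2 fun s' => ∏ i : Fin (k + 1), phiVec q α β (s' i)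

/-- The residual (unnormalized) vector `μ|ν'⟩ =
`Σ_{s_1+⋯+s_{k+1}+k+1 ≤ m} α^{s_1+⋯+s_{k+1}} β^{k+1} |s_1,…,s_{k+1}⟩`. -/
noncomputable def nuVec (q m k : ℕ) (α β : ℝ) :
    EuclideanSpace ℝ (Fin (k + 1) → Fin (q + 1)) :=
  WithLp.toLp 2 fun s' =>
    if (∑ i : Fin (k + 1), ((s' i : ℕ))) + k + 1 ≤ m then
      α ^ (∑ i : Fin (k + 1), ((s' i : ℕ))) * β ^ (k + 1)
    else 0

/-!
Fix a basis index `s = (s₀, …, s_k)`. The amplitude of `B|x⟩` at `s` vanishes unless the first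
`h = |x|` runs of zeros of `x` are `s₀, …, s_{h-1}`, and these runs determine `x`; so every `h`
contributes at most one string. For that string the middle register carries
`α^t · midVec_t = φ_q - Σ_{s < t} β α^s |s⟩` (this needs `t ≤ m ≤ q`), and the subtracted part is
exactly what the string of weight `h + 1` accounts for. The sum over `x` therefore telescopes, in
`h`, from `φ_q^{⊗(k+1)}` down to the strings with `k + 1` ones, i.e. `nuVec`. Orthogonality holds
for the same reason: on the support of `nuVec` the middle register of the matching `B|x⟩` sits
below `t`, where `midVec_t` vanishes.
-/

/-- The length of `0^{r 0} 1 ⋯ 0^{r (h-1)} 1`. -/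
def prefixLen (r : ℕ → ℕ) (h : ℕ) : ℕ := ∑ j ∈ range h, (r j + 1)

def runPos (r : ℕ → ℕ) (i : ℕ) : ℕ := prefixLen r i + r i

def runList (r : ℕ → ℕ) (h : ℕ) : List ℕ := (List.range h).map (runPos r)

/-- The run lengths of a sorted list of positions; `sRun x` is `listRuns (onesList x)` by
definition. -/
def listRuns (L : List ℕ) (i : ℕ) : ℕ :=
  L.getD i 0 - (if i = 0 then 0 else L.getD (i - 1) 0 + 1)

section RunLength

variable (r : ℕ → ℕ)

lemma prefixLen_eq_sum_add (h : ℕ) : prefixLen r h = (∑ j ∈ range h, r j) + h := by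
  simp [prefixLen, sum_add_distrib]

lemma prefixLen_succ (i : ℕ) : prefixLen r (i + 1) = runPos r i + 1 := by
  simp only [prefixLen, runPos, sum_range_succ]
  omega

lemma prefixLen_mono : Monotone (prefixLen r) :=
  fun _ _ hij => sum_le_sum_of_subset (range_subset_range.2 hij)

lemma runPos_succ (i : ℕ) : runPos r (i + 1) = runPos r i + 1 + r (i + 1) := by
  rw [runPos, prefixLen_succ]

lemma runPos_strictMono : StrictMono (runPos r) :=
  strictMono_nat_of_lt_succ fun i => by rw [runPos_succ]; omega

lemma runPos_lt_prefixLen {i h : ℕ} (hi : i < h) : runPos r i < prefixLen r h := by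
  have := prefixLen_mono r (Nat.succ_le_of_lt hi)
  rw [prefixLen_succ] at this
  omega

lemma pairwise_runList (h : ℕ) : (runList r h).Pairwise (· < ·) :=
  List.Pairwise.map _ (fun _ _ hab => runPos_strictMono r hab) List.pairwise_lt_range

lemma getD_runList {h i : ℕ} (hi : i < h) : (runList r h).getD i 0 = runPos r i := by
  simp [runList, hi]

lemma listRuns_runList {h i : ℕ} (hi : i < h) : listRuns (runList r h) i = r i := by
  unfold listRuns
  rcases Nat.eq_zero_or_pos i with rfl | hpos
  · rw [if_pos rfl, getD_runList r hi]
    simp [runPos, prefixLen]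
  · obtain ⟨i, rfl⟩ : ∃ j, i = j + 1 := ⟨i - 1, by omega⟩
    rw [if_neg (by omega), getD_runList r hi, getD_runList r (by omega), Nat.add_sub_cancel,
      runPos_succ]
    omega

variable {r}

lemma prefixLen_congr {r' : ℕ → ℕ} {h : ℕ} (hr : ∀ i < h, r i = r' i) :
    prefixLen r h = prefixLen r' h :=
  sum_congr rfl fun j hj => by rw [hr j (mem_range.1 hj)]

lemma runList_congr {r' : ℕ → ℕ} {h : ℕ} (hr : ∀ i < h, r i = r' i) :
    runList r h = runList r' h := by
  refine List.map_congr_left fun i hi => ?_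
  have hi : i < h := List.mem_range.1 hi
  rw [runPos, runPos, hr i hi, prefixLen_congr fun j hj => hr j (hj.trans hi)]

end RunLength

lemma getD_eq_runPos_listRuns {L : List ℕ} (hL : L.Pairwise (· < ·)) :
    ∀ i < L.length, L.getD i 0 = runPos (listRuns L) i
  | 0, _ => by simp [runPos, prefixLen, listRuns]
  | i + 1, hi => by
    have hlt : L.getD i 0 < L.getD (i + 1) 0 := by
      rw [List.getD_eq_getElem L 0 (by omega), List.getD_eq_getElem L 0 hi]
      exact List.pairwise_iff_getElem.1 hL i (i + 1) (by omega) hi (by omega)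
    rw [runPos_succ, ← getD_eq_runPos_listRuns hL i (by omega)]
    simp only [listRuns, Nat.succ_ne_zero, if_false, Nat.add_sub_cancel]
    omega

lemma eq_runList_listRuns {L : List ℕ} (hL : L.Pairwise (· < ·)) :
    L = runList (listRuns L) L.length := by
  refine List.ext_getElem (by simp [runList]) fun i h₁ _ => ?_
  rw [← List.getD_eq_getElem L 0 h₁, getD_eq_runPos_listRuns hL i h₁]
  simp [runList]

section BitString

variable {m : ℕ}

lemma length_onesList (x : Fin m → Bool) : (onesList x).length = hamWt x := by
  rw [onesList, hamWt, Fin.univ_def]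
  simp [Finset.filter, Finset.card, Multiset.filter_coe]


lemma pairwise_onesList (x : Fin m → Bool) : (onesList x).Pairwise (· < ·) :=
  List.Pairwise.map _ (fun _ _ hab => hab) ((List.pairwise_lt_finRange m).filter _)

lemma mem_onesList (x : Fin m → Bool) (j : Fin m) : (j : ℕ) ∈ onesList x ↔ x j = true := by
  simp [onesList, Fin.val_inj]

lemma lt_of_mem_onesList (x : Fin m → Bool) {j : ℕ} (hj : j ∈ onesList x) : j < m := by
  obtain ⟨a, _, rfl⟩ := List.mem_map.1 hj
  exact a.isLt

lemma onesList_eq_runList (x : Fin m → Bool) : onesList x = runList (sRun x) (hamWt x) := by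
  rw [← length_onesList]
  exact eq_runList_listRuns (pairwise_onesList x)

lemma prefixLen_sRun_le (x : Fin m → Bool) : prefixLen (sRun x) (hamWt x) ≤ m := by
  rcases Nat.eq_zero_or_pos (hamWt x) with h0 | hpos
  · simp [h0, prefixLen]
  · obtain ⟨h, hh⟩ : ∃ h, hamWt x = h + 1 := ⟨hamWt x - 1, by omega⟩
    have hlast : (onesList x).getD h 0 ∈ onesList x := by
      rw [List.getD_eq_getElem _ 0 (by rw [length_onesList]; omega)]
      exact List.getElem_mem _
    have hlt := lt_of_mem_onesList x hlast
    rw [onesList_eq_runList, hh, getD_runList _ (Nat.lt_succ_self h)] at hlt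
    rw [hh, prefixLen_succ]
    omega

lemma tTrail_eq (x : Fin m → Bool) : tTrail x = m - prefixLen (sRun x) (hamWt x) := by
  have hsum : ((List.range (hamWt x)).map (sRun x)).sum = ∑ j ∈ range (hamWt x), sRun x j := rfl
  rw [tTrail, hsum, prefixLen_eq_sum_add, Nat.sub_sub]

/-- The bit string `0^{r 0} 1 ⋯ 0^{r (h-1)} 1 0 ⋯ 0` of length `m`. -/
def ofRuns (m : ℕ) (r : ℕ → ℕ) (h : ℕ) : Fin m → Bool := fun j => decide ((j : ℕ) ∈ runList r h)

variable {r : ℕ → ℕ} {h : ℕ}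

lemma onesList_ofRuns (hc : prefixLen r h ≤ m) : onesList (ofRuns m r h) = runList r h := by
  refine List.Pairwise.eq_of_mem_iff (pairwise_onesList _) (pairwise_runList r h) fun j => ?_
  constructor
  · intro hj
    simpa [ofRuns] using (mem_onesList _ ⟨j, lt_of_mem_onesList _ hj⟩).1 hj
  · intro hj
    obtain ⟨i, hi, rfl⟩ : ∃ i < h, runPos r i = j := by simpa [runList] using hj
    exact (mem_onesList _ ⟨_, (runPos_lt_prefixLen r hi).trans_le hc⟩).2
      (by simpa [ofRuns] using hj)

lemma hamWt_ofRuns (hc : prefixLen r h ≤ m) : hamWt (ofRuns m r h) = h := by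
  rw [← length_onesList, onesList_ofRuns hc]
  simp [runList]

lemma sRun_ofRuns (hc : prefixLen r h ≤ m) {i : ℕ} (hi : i < h) : sRun (ofRuns m r h) i = r i :=
  (congrArg (listRuns · i) (onesList_ofRuns hc)).trans (listRuns_runList r hi)

lemma eq_ofRuns {x : Fin m → Bool} (hr : ∀ i < hamWt x, sRun x i = r i) :
    x = ofRuns m r (hamWt x) := by
  have hL : onesList x = runList r (hamWt x) := (onesList_eq_runList x).trans (runList_congr hr)
  funext j
  rw [Bool.eq_iff_iff, ← mem_onesList, hL]
  simp [ofRuns]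

end BitString

lemma Fin.prod_filter_le_val_eq_mul {M : Type*} [CommMonoid M] {n : ℕ} (f : Fin n → M) {h : ℕ}
    (hh : h < n) :
    ∏ i ∈ univ.filter (fun i : Fin n => h ≤ (i : ℕ)), f i
      = f ⟨h, hh⟩ * ∏ i ∈ univ.filter (fun i : Fin n => h + 1 ≤ (i : ℕ)), f i := by
  have hsplit : univ.filter (fun i : Fin n => h ≤ (i : ℕ))
      = insert ⟨h, hh⟩ (univ.filter fun i : Fin n => h + 1 ≤ (i : ℕ)) := by
    ext i
    simp only [mem_filter, mem_univ, true_and, mem_insert, Fin.ext_iff]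
    omega
  rw [hsplit, prod_insert (by simp)]

lemma phiVec_eq_midVec_add {q t : ℕ} (α β : ℝ) (ht : t ≤ q) (s : Fin (q + 1)) :
    phiVec q α β s = α ^ t * midVec q t α β s + if (s : ℕ) < t then β * α ^ (s : ℕ) else 0 := by
  have hs := s.is_le
  unfold phiVec midVec
  split_ifs <;> (try simp only [mul_zero, zero_add, add_zero]) <;> first
    | omega
    | rw [mul_left_comm, pow_mul_pow_sub _ (by omega)]
    | rw [pow_mul_pow_sub _ (by omega)]

lemma midVec_eq_zero_of_lt {q t : ℕ} (α β : ℝ) (ht : t ≤ q) {s : Fin (q + 1)} (hs : (s : ℕ) < t) :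
    midVec q t α β s = 0 := by
  unfold midVec
  rw [if_neg (by omega), if_neg (by omega)]

section Amplitudes

variable {q m k h : ℕ} {α β : ℝ}

def toRuns (s' : Fin (k + 1) → Fin (q + 1)) (i : ℕ) : ℕ :=
  if hi : i < k + 1 then s' ⟨i, hi⟩ else 0

lemma toRuns_val (s' : Fin (k + 1) → Fin (q + 1)) (i : Fin (k + 1)) : toRuns s' i = s' i := by
  simp [toRuns, i.isLt]

lemma sum_range_toRuns (s' : Fin (k + 1) → Fin (q + 1)) :
    ∑ j ∈ range (k + 1), toRuns s' j = ∑ i : Fin (k + 1), (s' i : ℕ) := by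
  rw [← Fin.sum_univ_eq_sum_range]
  simp only [toRuns_val]

lemma prefixLen_toRuns_top (s' : Fin (k + 1) → Fin (q + 1)) :
    prefixLen (toRuns s') (k + 1) = (∑ i : Fin (k + 1), (s' i : ℕ)) + k + 1 := by
  rw [prefixLen_eq_sum_add, sum_range_toRuns, add_assoc]

noncomputable def phiTail (q k : ℕ) (α β : ℝ) (s' : Fin (k + 1) → Fin (q + 1)) (h : ℕ) : ℝ :=
  ∏ i ∈ univ.filter (fun i : Fin (k + 1) => h ≤ (i : ℕ)), phiVec q α β (s' i)

variable (s' : Fin (k + 1) → Fin (q + 1))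

lemma phiTail_zero : phiTail q k α β s' 0 = phiPow q k α β s' := by
  simp [phiTail, phiPow]

lemma phiTail_top : phiTail q k α β s' (k + 1) = 1 := by
  rw [phiTail, filter_false_of_mem fun i _ => not_le.2 i.isLt, prod_empty]

lemma phiTail_eq_mul (hh : h < k + 1) :
    phiTail q k α β s' h = phiVec q α β (s' ⟨h, hh⟩) * phiTail q k α β s' (h + 1) :=
  Fin.prod_filter_le_val_eq_mul _ hh

lemma Bvec_ofRuns (hh : h < k + 1) (hc : prefixLen (toRuns s') h ≤ m) :
    Bvec q m k α β (ofRuns m (toRuns s') h) s'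
      = midVec q (m - prefixLen (toRuns s') h) α β (s' ⟨h, hh⟩) * phiTail q k α β s' (h + 1) := by
  have ht : tTrail (ofRuns m (toRuns s') h) = m - prefixLen (toRuns s') h := by
    rw [tTrail_eq, hamWt_ofRuns hc, prefixLen_congr fun i hi => sRun_ofRuns hc hi]
  simp only [Bvec, hamWt_ofRuns hc, ht, WithLp.ofLp_toLp]
  rw [← prod_subset (subset_univ (univ.filter fun i : Fin (k + 1) => h ≤ (i : ℕ))),
    Fin.prod_filter_le_val_eq_mul _ hh, phiTail]
  · congr 1
    · simp
    · refine prod_congr rfl fun i hi => ?_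
      simp only [mem_filter, mem_univ, true_and] at hi
      rw [if_neg (by omega), if_neg (by omega)]
  · intro i _ hi
    simp only [mem_filter, mem_univ, true_and, not_le] at hi
    rw [if_pos hi, if_pos (by rw [sRun_ofRuns hc hi, toRuns_val])]

lemma Bvec_apply_eq_zero_of_sRun_ne {x : Fin m → Bool} {i : Fin (k + 1)} (hi : (i : ℕ) < hamWt x)
    (hne : sRun x i ≠ s' i) : Bvec q m k α β x s' = 0 :=
  prod_eq_zero (mem_univ i) (by rw [if_pos hi, if_neg (Ne.symm hne)])

lemma eq_ofRuns_of_Bvec_ne_zero {x : Fin m → Bool} (hx : hamWt x ≤ k)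
    (hB : Bvec q m k α β x s' ≠ 0) :
    x = ofRuns m (toRuns s') (hamWt x) ∧ prefixLen (toRuns s') (hamWt x) ≤ m := by
  have hr : ∀ i < hamWt x, sRun x i = toRuns s' i := by
    intro i hi
    by_contra hne
    exact hB (Bvec_apply_eq_zero_of_sRun_ne s' (i := ⟨i, by omega⟩) hi (by rwa [← toRuns_val]))
  exact ⟨eq_ofRuns hr, prefixLen_congr hr ▸ prefixLen_sRun_le x⟩


/-- The amplitude at `s'` of `|φ_q⟩^{⊗(k+1)}` minus the contributions of all `B|x⟩` with
`|x| < h`; it runs from `phiPow` at `h = 0` to `nuVec` at `h = k + 1`. -/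
noncomputable def partialAmp (q m k : ℕ) (α β : ℝ) (s' : Fin (k + 1) → Fin (q + 1)) (h : ℕ) :
    ℝ :=
  if prefixLen (toRuns s') h ≤ m then
    α ^ (∑ j ∈ range h, toRuns s' j) * β ^ h * phiTail q k α β s' h
  else 0

lemma partialAmp_zero : partialAmp q m k α β s' 0 = phiPow q k α β s' := by
  simp [partialAmp, prefixLen, phiTail_zero]

lemma partialAmp_top : partialAmp q m k α β s' (k + 1) = nuVec q m k α β s' := by
  rw [partialAmp, prefixLen_toRuns_top, sum_range_toRuns, phiTail_top, mul_one]
  rfl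

lemma partialAmp_eq_zero (hc : m < prefixLen (toRuns s') h) : partialAmp q m k α β s' h = 0 :=
  if_neg (not_le.2 hc)

lemma partialAmp_sub_succ (hq : m ≤ q) (hh : h < k + 1) (hc : prefixLen (toRuns s') h ≤ m) :
    partialAmp q m k α β s' h - partialAmp q m k α β s' (h + 1)
      = α ^ (m - h) * β ^ h * Bvec q m k α β (ofRuns m (toRuns s') h) s' := by
  set t := m - prefixLen (toRuns s') h
  have hrh : toRuns s' h = s' ⟨h, hh⟩ := toRuns_val s' ⟨h, hh⟩
  have hP := prefixLen_eq_sum_add (toRuns s') h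
  have hexp : α ^ (m - h) = α ^ (∑ j ∈ range h, toRuns s' j) * α ^ t := by
    rw [← pow_add]
    congr 1
    omega
  have hnext : prefixLen (toRuns s') (h + 1) ≤ m ↔ (s' ⟨h, hh⟩ : ℕ) < t := by
    rw [prefixLen_succ, runPos, hrh]
    omega
  rw [Bvec_ofRuns s' hh hc, partialAmp, partialAmp, if_pos hc, phiTail_eq_mul s' hh,
    phiVec_eq_midVec_add α β (by omega : t ≤ q), hexp, sum_range_succ, hrh, pow_add, pow_succ]
  simp only [hnext]
  split_ifs <;> ring

lemma sum_hamWt_eq_partialAmp_sub (hq : m ≤ q) (hh : h < k + 1) :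
    ∑ x ∈ univ.filter (fun x : Fin m → Bool => hamWt x = h),
        α ^ (m - hamWt x) * β ^ hamWt x * Bvec q m k α β x s'
      = partialAmp q m k α β s' h - partialAmp q m k α β s' (h + 1) := by
  by_cases hc : prefixLen (toRuns s') h ≤ m
  · rw [sum_eq_single_of_mem (ofRuns m (toRuns s') h) (by simp [hamWt_ofRuns hc]),
      hamWt_ofRuns hc, partialAmp_sub_succ s' hq hh hc]
    intro x hx hne
    obtain rfl : hamWt x = h := (mem_filter.1 hx).2
    by_contra hB
    exact hne (eq_ofRuns_of_Bvec_ne_zero s' (by omega) (right_ne_zero_of_mul hB)).1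
  · have hc' : m < prefixLen (toRuns s') (h + 1) :=
      (not_le.1 hc).trans_le (prefixLen_mono _ h.le_succ)
    rw [partialAmp_eq_zero s' (not_le.1 hc), partialAmp_eq_zero s' hc', sub_zero]
    refine sum_eq_zero fun x hx => ?_
    obtain rfl : hamWt x = h := (mem_filter.1 hx).2
    by_contra hB
    exact hc (eq_ofRuns_of_Bvec_ne_zero s' (by omega) (right_ne_zero_of_mul hB)).2

lemma phiPow_apply_eq_sum_add_nuVec (hq : m ≤ q) :
    phiPow q k α β s'
      = ∑ x ∈ univ.filter (fun x : Fin m → Bool => hamWt x ≤ k),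
          α ^ (m - hamWt x) * β ^ hamWt x * Bvec q m k α β x s'
        + nuVec q m k α β s' := by
  have hfib : ∀ h ∈ range (k + 1),
      ∑ x ∈ univ.filter (fun x : Fin m → Bool => hamWt x ≤ k) with hamWt x = h,
          α ^ (m - hamWt x) * β ^ hamWt x * Bvec q m k α β x s'
        = partialAmp q m k α β s' h - partialAmp q m k α β s' (h + 1) := by
    intro h hh
    rw [← sum_hamWt_eq_partialAmp_sub s' hq (mem_range.1 hh), filter_filter]
    exact sum_congr (by ext x; simp only [mem_filter, mem_univ, true_and, mem_range] at hh ⊢; omega)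
      fun _ _ => rfl
  rw [← sum_fiberwise_of_maps_to (g := hamWt) (t := range (k + 1))
      fun x hx => mem_range.2 (Nat.lt_succ_of_le (mem_filter.1 hx).2),
    sum_congr rfl hfib, sum_range_sub', partialAmp_zero, partialAmp_top, sub_add_cancel]

lemma Bvec_apply_mul_nuVec_apply_eq_zero (hq : m ≤ q) {x : Fin m → Bool} (hx : hamWt x ≤ k) :
    Bvec q m k α β x s' * nuVec q m k α β s' = 0 := by
  rcases eq_or_ne (Bvec q m k α β x s') 0 with hB | hB
  · rw [hB, zero_mul]
  by_cases hν : prefixLen (toRuns s') (k + 1) ≤ m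
  · obtain ⟨hx', hc⟩ := eq_ofRuns_of_Bvec_ne_zero s' hx hB
    have hh : hamWt x < k + 1 := by omega
    have hlt : (s' ⟨hamWt x, hh⟩ : ℕ) < m - prefixLen (toRuns s') (hamWt x) := by
      have := (prefixLen_mono _ hh).trans hν
      rw [prefixLen_succ, runPos, toRuns_val s' ⟨hamWt x, hh⟩] at this
      omega
    have hBx := Bvec_ofRuns (α := α) (β := β) s' hh hc
    rw [← hx', midVec_eq_zero_of_lt α β (by omega) hlt, zero_mul] at hBx
    rw [hBx, zero_mul]
  · simp only [nuVec, WithLp.ofLp_toLp]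
    rw [← prefixLen_toRuns_top, if_neg hν, mul_zero]

end Amplitudes

theorem phiPow_decomposition_general (q m k : ℕ) (hq : m ≤ q) (α β : ℝ) :
    phiPow q k α β
        = (∑ x ∈ Finset.univ.filter fun x : Fin m → Bool => hamWt x ≤ k,
            (α ^ (m - hamWt x) * β ^ (hamWt x)) • Bvec q m k α β x)
          + nuVec q m k α β
      ∧ (∀ x : Fin m → Bool, hamWt x ≤ k →
          (inner ℝ (Bvec q m k α β x) (nuVec q m k α β) : ℝ) = 0) := by
  refine ⟨?_, fun x hx => ?_⟩
  · ext s'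
    simp only [PiLp.add_apply, WithLp.ofLp_sum, Finset.sum_apply, PiLp.smul_apply, smul_eq_mul]
    exact phiPow_apply_eq_sum_add_nuVec s' hq
  · rw [PiLp.inner_apply]
    refine sum_eq_zero fun s' _ => ?_
    simpa [mul_comm] using Bvec_apply_mul_nuVec_apply_eq_zero s' hq hx

/-- For `q ≥ m` and `α, β > 0` with `α² + β² = 1`:
`|φ_q⟩^{⊗(k+1)} = Σ_{x ∈ {0,1}^m, |x| ≤ k} α^{m−|x|} β^{|x|} B^k_q|x⟩ + μ|ν'⟩`,
where `μ|ν'⟩ = nuVec` (so `μ = ‖nuVec‖ ≥ 0` is the normalization and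
`|ν'⟩ = nuVec/μ` is a unit vector), and `μ|ν'⟩` is orthogonal to every
`B^k_q|x⟩` with `|x| ≤ k`. -/
theorem phiPow_decomposition (q m k : ℕ) (hq : m ≤ q) (α β : ℝ)
    (hα : 0 < α) (hβ : 0 < β) (hαβ : α ^ 2 + β ^ 2 = 1) :
    phiPow q k α β
        = (∑ x ∈ Finset.univ.filter fun x : Fin m → Bool => hamWt x ≤ k,
            (α ^ (m - hamWt x) * β ^ (hamWt x)) • Bvec q m k α β x)
          + nuVec q m k α β
      ∧ (∀ x : Fin m → Bool, hamWt x ≤ k →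
          (inner ℝ (Bvec q m k α β x) (nuVec q m k α β) : ℝ) = 0) :=
  phiPow_decomposition_general q m k hq α β
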